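/- arXiv:1606.04814 — 7 statements merged into one kernel-verified Lean document; each statement's English description precedes it below -/
import Mathlib

section
/- Let A ⊂ ℤ≥0 with 0 ∈ A and |A| = d, let Ω = ⋃_{a∈A}[a, a+1], and let Γ = {γ_0 = 0, γ_1, …, γ_{d−1}} ⊂ [0,1) be distinct reals such that Λ = Γ + ℤ is a spectrum for Ω. Partition Γ into its rational equivalence classes Γ_1, …, Γ_k, where γ_i ∼ γ_j iff γ_i − γ_j ∈ ℚ. Let Z = {n ∈ ℤ : ∑_{γ∈Γ} e^{2πiγn} = 0}, let X = {n ∈ ℤ : ∑_{γ∈Γ_j} e^{2πiγn} = 0 for every j = 1,…,k}, and let F = Z \ X. Then Γ ⊆ ℚ (equivalently, Λ ⊆ ℚ) if and only if (A − A) ∩ F = ∅. -/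
/-!
Since `Γ + ℤ` is a spectrum, the exponentials `e^{2πiγx}`, `γ ∈ Γ`, are orthogonal on `Ω`;
integrating over the unit intervals turns this into orthogonality of the rows of the `d × d`
matrix `(e^{2πiγa})_{γ ∈ Γ, a ∈ A}`. That matrix is therefore `√d` times a unitary matrix, so its
columns are orthogonal too: `δ̂_Γ` vanishes on `(A − A) \ {0}`.

If `Γ ⊆ ℚ` there is a single equivalence class, so `X = Z` and `F = ∅`. Conversely, if
`(A − A) ∩ F = ∅`, the subsum over the class `C` of `γ_0 = 0` vanishes on `(A − A) \ {0}`.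
Evaluating `∑_{a,b ∈ A} ∑_{γ ∈ C} e^{2πiγ(a−b)}` once through this, and once as
`∑_{γ ∈ C} |∑_{a ∈ A} e^{2πiγa}|²`, where only `γ = 0` survives by row orthogonality,
gives `d |C| = d²`, so `C = Γ`.
-/

open MeasureTheory Complex Classical

/-- `Λ` is a spectrum for `Ω`: the normalized exponentials
`|Ω|^{-1/2} e^{2πiλx}·1_Ω`, `λ ∈ Λ`, form a Hilbert (orthonormal) basis of `L²(Ω)`. -/
def IsSpectrum (Ω : Set ℝ) (Λ : Set ℝ) : Prop :=
  ∃ b : HilbertBasis Λ ℂ (Lp ℂ 2 (volume.restrict Ω)),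
    ∀ lam : Λ,
      (b lam : ℝ → ℂ) =ᵐ[volume.restrict Ω]
        fun x => ((Real.sqrt (volume Ω).toReal : ℂ))⁻¹ *
          Complex.exp (2 * Real.pi * Complex.I * (lam : ℝ) * x)

open Finset
open scoped Real Matrix

lemma biUnion_Icc_ae_eq_biUnion_Ico (A : Finset ℕ) :
    (⋃ a ∈ A, Set.Icc (a : ℝ) (a + 1)) =ᵐ[volume] ⋃ a ∈ A, Set.Ico (a : ℝ) (a + 1) :=
  Filter.EventuallyEq.countable_bUnion A.countable_toSet fun _ _ => Ico_ae_eq_Icc.symm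

lemma pairwiseDisjoint_Ico_natCast (A : Finset ℕ) :
    (A : Set ℕ).PairwiseDisjoint fun a => Set.Ico (a : ℝ) (a + 1) := fun a _ b _ hab => by
  simpa using Set.pairwise_disjoint_Ico_intCast ℝ ((Nat.cast_injective (R := ℤ)).ne hab)

lemma volume_biUnion_Icc (A : Finset ℕ) :
    volume (⋃ a ∈ A, Set.Icc (a : ℝ) (a + 1)) = A.card := by
  rw [measure_congr (biUnion_Icc_ae_eq_biUnion_Ico A),
    measure_biUnion_finset (pairwiseDisjoint_Ico_natCast A) fun _ _ => measurableSet_Ico]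
  simp

lemma integral_exp_biUnion_Icc (A : Finset ℕ) {t : ℝ} (ht : t ≠ 0) :
    ∫ x in ⋃ a ∈ A, Set.Icc (a : ℝ) (a + 1), exp (2 * π * I * t * x) =
      (∑ a ∈ A, exp (2 * π * I * t * a)) * ((exp (2 * π * I * t) - 1) / (2 * π * I * t)) := by
  have hc : (2 * π * I * t : ℂ) ≠ 0 := by simp [Real.pi_ne_zero, ht]
  have hint : Continuous fun x : ℝ => exp (2 * π * I * t * x) := by fun_prop
  rw [setIntegral_congr_set (biUnion_Icc_ae_eq_biUnion_Ico A),
    integral_biUnion_finset A (fun _ _ => measurableSet_Ico) (pairwiseDisjoint_Ico_natCast A)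
      fun _ _ => hint.integrableOn_Icc.mono_set Set.Ico_subset_Icc_self, sum_mul]
  refine sum_congr rfl fun a _ => ?_
  rw [integral_Ico_eq_integral_Ioo, ← integral_Ioc_eq_integral_Ioo,
    ← intervalIntegral.integral_of_le (by linarith), integral_exp_mul_complex hc]
  push_cast
  rw [mul_add, exp_add, mul_one]
  field_simp

lemma IsSpectrum.integral_exp_eq_zero {Ω Λ : Set ℝ} (h : IsSpectrum Ω Λ)
    (hΩ : (volume Ω).toReal ≠ 0) {l l' : ℝ} (hl : l ∈ Λ) (hl' : l' ∈ Λ) (hne : l ≠ l') :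
    ∫ x in Ω, exp (2 * π * I * (l - l' : ℝ) * x) = 0 := by
  obtain ⟨b, hb⟩ := h
  have horth : inner ℂ (b ⟨l', hl'⟩) (b ⟨l, hl⟩) = 0 :=
    b.orthonormal.2 fun h => hne (congrArg Subtype.val h).symm
  set c : ℂ := (Real.sqrt (volume Ω).toReal : ℂ)⁻¹
  have hc : c ≠ 0 := by simpa [c] using hΩ
  have heq : (fun x => inner ℂ ((b ⟨l', hl'⟩ : ℝ → ℂ) x) ((b ⟨l, hl⟩ : ℝ → ℂ) x))
      =ᵐ[volume.restrict Ω] fun x : ℝ => c ^ 2 * exp (2 * π * I * (l - l' : ℝ) * x) := by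
    filter_upwards [hb ⟨l', hl'⟩, hb ⟨l, hl⟩] with x hx' hx
    rw [hx', hx, RCLike.inner_apply, map_mul, ← exp_conj]
    simp only [c, map_inv₀, map_mul, conj_ofReal, map_ofNat, conj_I]
    rw [mul_mul_mul_comm, ← exp_add]
    push_cast
    ring_nf
  rw [L2.inner_def, integral_congr_ae heq, integral_const_mul] at horth
  exact (mul_eq_zero.1 horth).resolve_left (pow_ne_zero 2 hc)

lemma IsSpectrum.sum_exp_eq_zero {A : Finset ℕ} (hA : A.Nonempty) {Λ : Set ℝ}
    (h : IsSpectrum (⋃ a ∈ A, Set.Icc (a : ℝ) (a + 1)) Λ) {l l' : ℝ} (hl : l ∈ Λ) (hl' : l' ∈ Λ)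
    (hnot : ∀ n : ℤ, l - l' ≠ n) :
    ∑ a ∈ A, exp (2 * π * I * (l - l' : ℝ) * a) = 0 := by
  have ht : l - l' ≠ 0 := by exact_mod_cast hnot 0
  have hvol : (volume (⋃ a ∈ A, Set.Icc (a : ℝ) (a + 1))).toReal ≠ 0 := by
    simpa [volume_biUnion_Icc] using hA.ne_empty
  have hint := h.integral_exp_eq_zero hvol hl hl' (sub_ne_zero.1 ht)
  rw [integral_exp_biUnion_Icc A ht] at hint
  have hexp : exp (2 * π * I * (l - l' : ℝ)) ≠ 1 := fun h1 => by
    obtain ⟨n, hn⟩ := exp_eq_one_iff.1 h1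
    have hn' : ((l - l' : ℝ) : ℂ) = n := mul_left_cancel₀ two_pi_I_ne_zero (by rw [hn]; ring)
    exact hnot n (by exact_mod_cast hn')
  exact (mul_eq_zero.1 hint).resolve_right <|
    div_ne_zero (sub_ne_zero.2 hexp) (mul_ne_zero two_pi_I_ne_zero (ofReal_ne_zero.2 ht))

lemma Matrix.conjTranspose_mul_self_eq_smul_one {m n 𝕜 : Type*} [Fintype m] [Fintype n]
    [DecidableEq m] [DecidableEq n] [Field 𝕜] [StarRing 𝕜]
    (hmn : Fintype.card m = Fintype.card n) {M : Matrix m n 𝕜} {c : 𝕜} (hc : c ≠ 0)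
    (h : M * Mᴴ = c • 1) : Mᴴ * M = c • 1 := by
  have h' : (c⁻¹ • Mᴴ) * M = 1 := (Matrix.mul_eq_one_comm_of_card_eq _ _ _ hmn).1 <| by
    rw [Matrix.mul_smul, h, smul_smul, inv_mul_cancel₀ hc, one_smul]
  rw [← h', Matrix.smul_mul, smul_smul, mul_inv_cancel₀ hc, one_smul]

lemma exp_mul_star_exp (x y s : ℝ) :
    exp (2 * π * I * x * s) * star (exp (2 * π * I * y * s)) =
      exp (2 * π * I * (x - y : ℝ) * s) := by
  rw [RCLike.star_def, ← exp_conj, ← exp_add]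
  simp only [map_mul, conj_ofReal, map_ofNat, conj_I]
  push_cast
  ring_nf

lemma sum_exp_mul_sub_eq_zero {ι : Type*} [Fintype ι] {A : Finset ℕ}
    (hcard : A.card = Fintype.card ι) {γ : ι → ℝ}
    (hrow : ∀ j j', j ≠ j' → ∑ a ∈ A, exp (2 * π * I * (γ j - γ j' : ℝ) * a) = 0)
    {a b : ℕ} (ha : a ∈ A) (hb : b ∈ A) (hab : a ≠ b) :
    ∑ j, exp (2 * π * I * γ j * (((a : ℤ) - b : ℤ) : ℂ)) = 0 := by
  let M : Matrix ι A ℂ := Matrix.of fun j a => exp (2 * π * I * γ j * (a : ℕ))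
  have hrows : M * Mᴴ = (A.card : ℂ) • 1 := by
    refine Matrix.ext fun j j' => ?_
    have := fun a : ℕ => exp_mul_star_exp (γ j) (γ j') a
    simp only [ofReal_natCast] at this
    simp only [Matrix.mul_apply, Matrix.conjTranspose_apply, Matrix.smul_apply, Matrix.one_apply,
      M, Matrix.of_apply, this, smul_eq_mul]
    rw [sum_coe_sort A fun a : ℕ => exp (2 * π * I * (γ j - γ j' : ℝ) * a)]
    split_ifs with hjj'
    · simp [hjj']
    · rw [hrow j j' hjj', mul_zero]
  have hcols := Matrix.conjTranspose_mul_self_eq_smul_one (by simp [hcard])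
    (Nat.cast_ne_zero.2 (card_ne_zero_of_mem ha)) hrows
  have := congrFun (congrFun hcols ⟨b, hb⟩) ⟨a, ha⟩
  simp only [Matrix.mul_apply, Matrix.conjTranspose_apply, Matrix.smul_apply, Matrix.one_apply,
    M, Matrix.of_apply] at this
  rw [if_neg (by simpa using hab.symm), smul_zero] at this
  rw [← this]
  refine sum_congr rfl fun j _ => ?_
  rw [mul_comm, RCLike.star_def, ← exp_conj, ← exp_add]
  simp only [map_mul, conj_ofReal, map_ofNat, conj_I, conj_natCast]
  push_cast
  ring_nf

lemma card_eq_card_of_sum_exp_eq_zero {ι : Type*} {A : Finset ℕ} (hA : A.Nonempty) {γ : ι → ℝ}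
    {C : Finset ι} {i₀ : ι} (hi₀ : i₀ ∈ C) (hγ : γ i₀ = 0)
    (hrow : ∀ i ∈ C, i ≠ i₀ → ∑ a ∈ A, exp (2 * π * I * γ i * a) = 0)
    (hcol : ∀ a ∈ A, ∀ b ∈ A, a ≠ b →
      ∑ i ∈ C, exp (2 * π * I * γ i * (((a : ℤ) - b : ℤ) : ℂ)) = 0) :
    C.card = A.card := by
  set S := ∑ a ∈ A, ∑ b ∈ A, ∑ i ∈ C, exp (2 * π * I * γ i * (((a : ℤ) - b : ℤ) : ℂ)) with hS
  have hdiag : S = A.card * C.card := by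
    have hcollapse : ∀ a ∈ A,
        ∑ b ∈ A, ∑ i ∈ C, exp (2 * π * I * γ i * (((a : ℤ) - b : ℤ) : ℂ)) = C.card :=
      fun a ha => by
        rw [sum_eq_single_of_mem a ha fun b hb hba => hcol a ha b hb hba.symm]
        simp
    rw [hS, sum_congr rfl hcollapse, sum_const, nsmul_eq_mul]
  have hsq : S = A.card * A.card := by
    have hfactor : ∀ i ∈ C, ∑ a ∈ A, ∑ b ∈ A, exp (2 * π * I * γ i * (((a : ℤ) - b : ℤ) : ℂ)) =
        (∑ a ∈ A, exp (2 * π * I * γ i * a)) * ∑ b ∈ A, exp (-(2 * π * I * γ i * b)) :=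
      fun i _ => by
        rw [sum_mul_sum]
        refine sum_congr rfl fun a _ => sum_congr rfl fun b _ => ?_
        rw [← exp_add]
        push_cast
        ring_nf
    rw [show S = ∑ i ∈ C, ∑ a ∈ A, ∑ b ∈ A, exp (2 * π * I * γ i * (((a : ℤ) - b : ℤ) : ℂ)) by
        simp only [hS, sum_comm (s := C)], sum_congr rfl hfactor,
      sum_eq_single_of_mem i₀ hi₀ fun i hi hii₀ => by rw [hrow i hi hii₀, zero_mul]]
    simp [hγ]
  exact_mod_cast mul_left_cancel₀ (Nat.cast_ne_zero.2 hA.card_ne_zero) (hdiag.symm.trans hsq)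

theorem stmt2 (d : ℕ) (hd : 0 < d) (A : Finset ℕ) (h0A : 0 ∈ A) (hcard : A.card = d)
    (γ : Fin d → ℝ) (hγ0 : γ ⟨0, hd⟩ = 0) (hinj : Function.Injective γ)
    (hrange : ∀ j, γ j ∈ Set.Ico (0 : ℝ) 1)
    (hspec : IsSpectrum (⋃ a ∈ A, Set.Icc (a : ℝ) (a + 1))
      {x : ℝ | ∃ j : Fin d, ∃ n : ℤ, x = γ j + n}) :
    -- Z : integer zero set of δ̂_Γ
    -- X : common integer zeros of the subsums over the rational equivalence classes
    -- F = Z \ X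
    ((∀ j, ∃ q : ℚ, γ j = (q : ℝ)) ↔
      ∀ a ∈ A, ∀ b ∈ A, ((a : ℤ) - (b : ℤ)) ∉
        ({n : ℤ | ∑ j : Fin d, Complex.exp (2 * Real.pi * Complex.I * γ j * n) = 0} \
         {n : ℤ | ∀ j₀ : Fin d,
            ∑ j ∈ Finset.univ.filter (fun i : Fin d => ∃ q : ℚ, γ i - γ j₀ = (q : ℝ)),
              Complex.exp (2 * Real.pi * Complex.I * γ j * n) = 0})) := by
  have hA : A.Nonempty := ⟨0, h0A⟩
  have hΓ : ∀ j, γ j ∈ {x : ℝ | ∃ j : Fin d, ∃ n : ℤ, x = γ j + n} := fun j => ⟨j, 0, by simp⟩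
  have hrow : ∀ j j', j ≠ j' → ∑ a ∈ A, exp (2 * π * I * (γ j - γ j' : ℝ) * a) = 0 :=
    fun j j' hjj' => hspec.sum_exp_eq_zero hA (hΓ j) (hΓ j') fun n hn => hinj.ne hjj' <| by
      rw [← Int.fract_eq_self.2 (hrange j), ← Int.fract_eq_self.2 (hrange j')]
      exact Int.fract_eq_fract.2 ⟨n, hn⟩
  constructor
  · rintro hrat a - b - ⟨hZ, hX⟩
    refine hX fun j₀ => ?_
    rwa [filter_true_of_mem fun i _ => ?_]
    obtain ⟨q, hq⟩ := hrat i
    obtain ⟨q₀, hq₀⟩ := hrat j₀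
    exact ⟨q - q₀, by push_cast [hq, hq₀]; ring⟩
  · intro H j
    set i₀ : Fin d := ⟨0, hd⟩
    set C := univ.filter fun i : Fin d => ∃ q : ℚ, γ i - γ i₀ = q
    have hcol : ∀ a ∈ A, ∀ b ∈ A, a ≠ b →
        ∑ i ∈ C, exp (2 * π * I * γ i * (((a : ℤ) - b : ℤ) : ℂ)) = 0 := by
      intro a ha b hb hab
      have hZ := sum_exp_mul_sub_eq_zero (by simp [hcard]) hrow ha hb hab
      exact not_not.1 (fun hX => H a ha b hb ⟨hZ, hX⟩) i₀
    have hC : C = univ := eq_univ_of_card C <| by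
      rw [card_eq_card_of_sum_exp_eq_zero hA (mem_filter.2 ⟨mem_univ _, 0, by simp⟩) hγ0
        (fun i _ hi => by simpa [hγ0] using hrow i i₀ hi) hcol, hcard, Fintype.card_fin]
    obtain ⟨q, hq⟩ := (mem_filter.1 (hC ▸ mem_univ j)).2
    exact ⟨q, by rwa [hγ0, sub_zero] at hq⟩
end

section
/- Let l ≥ 1 and let z_1, …, z_l be distinct nonzero complex numbers, and let m ∈ ℤ. Then the power sums ∑_{j=1}^{l} z_j^{m+k} for k = 1, …, l cannot all vanish; that is, there exists k with 1 ≤ k ≤ l such that ∑_{j=1}^{l} z_j^{m+k} ≠ 0. -/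
theorem stmt3 (l : ℕ) (hl : 1 ≤ l) (z : Fin l → ℂ) (hinj : Function.Injective z)
    (hz : ∀ j, z j ≠ 0) (m : ℤ) :
    ∃ k : ℕ, 1 ≤ k ∧ k ≤ l ∧ ∑ j : Fin l, z j ^ (m + (k : ℤ)) ≠ 0 := by
  by_contra h
  push_neg at h
  have hv : (fun j : Fin l => z j ^ (m + 1)) = 0 := by
    apply Matrix.eq_zero_of_forall_pow_sum_mul_pow_eq_zero hinj
    intro i
    have := h (i + 1) (Nat.le_add_left 1 i) (Nat.succ_le_of_lt i.isLt)
    rw [← this]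
    apply Finset.sum_congr rfl
    intro j _
    rw [← zpow_natCast (z j) (i : ℕ), ← zpow_add₀ (hz j)]
    congr 1
    push_cast
    ring
  have := congrFun hv ⟨0, hl⟩
  simp only [Pi.zero_apply] at this
  exact zpow_ne_zero _ (hz _) this
end

section
/- Let d ≥ 2, let γ_0 = 0, γ_1, …, γ_{d−1} be distinct reals in [0,1), and set z_j = e^{2πiγ_j}. Let m ∈ ℤ and let r, N be integers with ⌊d/2⌋ ≤ r < d and N > r. Suppose that ∑_{j=0}^{d−1} z_j^{m+nN+k} = 0 for all k = 1, …, r and all n = 0, 1, …, d−1 (i.e. an r × d flag is contained in the integer zero set of δ̂_Γ). Then every γ_j is rational. -/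
open Complex

private lemma lag_zero (s : Finset ℂ) (c : ℂ → ℂ)
    (h : ∀ n, n < s.card → ∑ w ∈ s, c w * w ^ n = 0) :
    ∀ w ∈ s, c w = 0 := by
  intro w0 hw0
  have hcard : 1 ≤ s.card := Finset.card_pos.mpr ⟨w0, hw0⟩
  set Q := Lagrange.basis s id w0 with hQ
  have hinj : Set.InjOn id (s : Set ℂ) := fun a _ b _ h => h
  have hdeg : Q.natDegree < s.card := by
    rw [hQ, Lagrange.natDegree_basis hinj hw0]; omega
  have key : ∑ w ∈ s, c w * Q.eval w = 0 := by
    have h1 : ∀ w ∈ s, c w * Q.eval w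
        = ∑ n ∈ Finset.range s.card, Q.coeff n * (c w * w ^ n) := by
      intro w hw
      rw [Polynomial.eval_eq_sum_range' hdeg, Finset.mul_sum]
      exact Finset.sum_congr rfl fun n _ => by ring
    rw [Finset.sum_congr rfl h1, Finset.sum_comm]
    refine Finset.sum_eq_zero fun n hn => ?_
    rw [← Finset.mul_sum, h n (Finset.mem_range.mp hn), mul_zero]
  have h2 : ∑ w ∈ s, c w * Q.eval w = c w0 := by
    rw [Finset.sum_eq_single w0]
    · rw [show Q.eval w0 = 1 from Lagrange.eval_basis_self hinj hw0, mul_one]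
    · intro w hw hne
      rw [show Q.eval w = 0 from Lagrange.eval_basis_of_ne (v := id) hne.symm hw, mul_zero]
    · intro h'; exact absurd hw0 h'
  rw [h2] at key
  exact key

theorem stmt4 (d : ℕ) (hd : 2 ≤ d) (γ : Fin d → ℝ)
    (hγ0 : γ ⟨0, by omega⟩ = 0) (hinj : Function.Injective γ)
    (hrange : ∀ j, γ j ∈ Set.Ico (0 : ℝ) 1)
    (m : ℤ) (r N : ℕ) (hr1 : d / 2 ≤ r) (hr2 : r < d) (hN : r < N)
    (hflag : ∀ k n : ℕ, 1 ≤ k → k ≤ r → n ≤ d - 1 →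
      ∑ j : Fin d, Complex.exp (2 * Real.pi * Complex.I * γ j) ^ (m + (n : ℤ) * N + k) = 0) :
    ∀ j, ∃ q : ℚ, γ j = (q : ℝ) := by
  set z : Fin d → ℂ := fun j => Complex.exp (2 * Real.pi * Complex.I * γ j) with hz
  have hzne : ∀ j, z j ≠ 0 := fun j => Complex.exp_ne_zero _
  have hzinj : Function.Injective z := by
    intro i j hij
    apply hinj
    rw [hz] at hij
    simp only [Complex.exp_eq_exp_iff_exists_int] at hij
    obtain ⟨n, hn⟩ := hij
    have h2 : (2 * Real.pi * Complex.I : ℂ) ≠ 0 := by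
      simp [Real.pi_ne_zero, Complex.I_ne_zero]
    have hcast : ((γ i : ℂ)) = (γ j : ℂ) + (n : ℂ) := by
      have : (2 * Real.pi * Complex.I : ℂ) * (γ i) =
          (2 * Real.pi * Complex.I : ℂ) * ((γ j : ℂ) + n) := by
        rw [hn]; ring
      exact mul_left_cancel₀ h2 this
    have hre : γ i = γ j + (n : ℝ) := by exact_mod_cast hcast
    have hi := hrange i
    have hj := hrange j
    simp only [Set.mem_Ico] at hi hj
    have hn0 : n = 0 := by
      have h1 : (n : ℝ) < 1 := by linarith
      have h2 : (-1 : ℝ) < (n : ℝ) := by linarith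
      have h1' : n < 1 := by exact_mod_cast h1
      have h2' : (-1 : ℤ) < n := by exact_mod_cast h2
      omega
    rw [hn0] at hre
    simpa using hre
  have hsplit : ∀ (j : Fin d) (k n : ℕ),
      z j ^ (m + (n : ℤ) * N + k) = z j ^ (m + (k : ℤ)) * ((z j ^ N)) ^ n := by
    intro j k n
    rw [show m + (n : ℤ) * N + k = (m + k) + ((N * n : ℕ) : ℤ) by push_cast; ring,
      zpow_add₀ (hzne j), zpow_natCast, pow_mul]
  -- fibers of j ↦ z j ^ N
  have hclass : ∀ (w : ℂ) (k : ℕ), 1 ≤ k → k ≤ r →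
      ∑ j ∈ Finset.univ.filter (fun j => z j ^ N = w), z j ^ (m + (k : ℤ)) = 0 := by
    intro w k hk1 hk2
    set T : Finset ℂ := Finset.univ.image (fun j => z j ^ N) with hT
    by_cases hw : w ∈ T
    · refine lag_zero T (fun u => ∑ j ∈ Finset.univ.filter (fun j => z j ^ N = u),
        z j ^ (m + (k : ℤ))) (fun n hn => ?_) w hw
      have hTd : T.card ≤ d := by
        calc T.card ≤ Finset.univ.card := Finset.card_image_le
        _ = d := by simp
      have hnd : n ≤ d - 1 := by omega
      calc ∑ u ∈ T, (∑ j ∈ Finset.univ.filter (fun j => z j ^ N = u),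
              z j ^ (m + (k : ℤ))) * u ^ n
          = ∑ u ∈ T, ∑ j ∈ Finset.univ.filter (fun j => z j ^ N = u),
              z j ^ (m + (k : ℤ)) * (z j ^ N) ^ n := by
            refine Finset.sum_congr rfl fun u _ => ?_
            rw [Finset.sum_mul]
            refine Finset.sum_congr rfl fun j hj => ?_
            rw [(Finset.mem_filter.mp hj).2]
        _ = ∑ j : Fin d, z j ^ (m + (k : ℤ)) * (z j ^ N) ^ n :=
            Finset.sum_fiberwise_of_maps_to
              (fun j _ => Finset.mem_image_of_mem _ (Finset.mem_univ j)) _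
        _ = ∑ j : Fin d, z j ^ (m + (n : ℤ) * N + k) := by
            exact Finset.sum_congr rfl fun j _ => (hsplit j k n).symm
        _ = 0 := hflag k n hk1 hk2 hnd
    · have hempty : Finset.univ.filter (fun j => z j ^ N = w) = ∅ := by
        rw [Finset.filter_eq_empty_iff]
        intro j _ hjw
        exact hw (hjw ▸ Finset.mem_image_of_mem _ (Finset.mem_univ j))
      simp [hempty]
  -- each nonempty fiber has size ≥ r + 1
  have hr0 : 1 ≤ r := by omega
  have hcardfib : ∀ w : ℂ, (Finset.univ.filter (fun j => z j ^ N = w)).Nonempty →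
      r + 1 ≤ (Finset.univ.filter (fun j => z j ^ N = w)).card := by
    intro w hne
    by_contra hlt
    push_neg at hlt
    set C := Finset.univ.filter (fun j => z j ^ N = w) with hC
    have hCr : C.card ≤ r := by omega
    have hScard : (C.image z).card = C.card := Finset.card_image_of_injective _ hzinj
    have key : ∀ u ∈ C.image z, u ^ (m + (1 : ℤ)) = 0 := by
      refine lag_zero _ (fun u => u ^ (m + (1 : ℤ))) (fun n hn => ?_)
      have hnr : n < r := by omega
      rw [Finset.sum_image (fun a _ b _ h => hzinj h)]
      have h2 := hclass w (n + 1) (by omega) (by omega)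
      rw [← h2]
      refine Finset.sum_congr rfl fun j hj => ?_
      rw [← zpow_natCast (z j) n, ← zpow_add₀ (hzne j)]
      congr 1
      push_cast
      ring
    obtain ⟨j0, hj0⟩ := hne
    exact zpow_ne_zero _ (hzne j0) (key (z j0) (Finset.mem_image_of_mem z hj0))
  intro j
  have hzj : z j ^ N = 1 := by
    by_contra hne1
    have hz0 : z ⟨0, by omega⟩ = 1 := by
      rw [hz]; simp [hγ0]
    have h0 : (⟨0, by omega⟩ : Fin d) ∈ Finset.univ.filter (fun i => z i ^ N = (1 : ℂ)) := by
      simp [hz0]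
    have hjj : j ∈ Finset.univ.filter (fun i => z i ^ N = z j ^ N) := by simp
    have hc1 := hcardfib 1 ⟨_, h0⟩
    have hc2 := hcardfib (z j ^ N) ⟨j, hjj⟩
    have hdisj : Disjoint (Finset.univ.filter (fun i => z i ^ N = (1 : ℂ)))
        (Finset.univ.filter (fun i => z i ^ N = z j ^ N)) := by
      rw [Finset.disjoint_left]
      intro a ha hb
      simp only [Finset.mem_filter] at ha hb
      exact hne1 (hb.2 ▸ ha.2)
    have hsum : (Finset.univ.filter (fun i => z i ^ N = (1 : ℂ))).card +
        (Finset.univ.filter (fun i => z i ^ N = z j ^ N)).card ≤ d := by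
      rw [← Finset.card_union_of_disjoint hdisj]
      calc _ ≤ (Finset.univ : Finset (Fin d)).card := Finset.card_le_univ _
      _ = d := by simp
    omega
  -- z j ^ N = 1 gives rationality
  have hexp : Complex.exp ((N : ℂ) * (2 * Real.pi * Complex.I * γ j)) = 1 := by
    rw [Complex.exp_nat_mul]
    exact hzj
  rw [Complex.exp_eq_one_iff] at hexp
  obtain ⟨n, hn⟩ := hexp
  have h2 : (2 * Real.pi * Complex.I : ℂ) ≠ 0 := by
    simp [Real.pi_ne_zero, Complex.I_ne_zero]
  have hcast : (N : ℂ) * (γ j : ℂ) = (n : ℂ) := by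
    have : (2 * Real.pi * Complex.I : ℂ) * ((N : ℂ) * γ j) =
        (2 * Real.pi * Complex.I : ℂ) * (n : ℂ) := by
      linear_combination hn
    exact mul_left_cancel₀ h2 this
  have hre : (N : ℝ) * γ j = (n : ℝ) := by exact_mod_cast hcast
  refine ⟨(n : ℚ) / (N : ℚ), ?_⟩
  have hN0 : (N : ℝ) ≠ 0 := by
    have : 0 < N := by omega
    exact_mod_cast this.ne'
  push_cast
  field_simp
  linarith
end

section
/- Let d ≥ 2, let z_0, …, z_{d−1} be distinct nonzero complex numbers, let m ∈ ℤ, k ∈ ℤ, and let N ≥ 1 be an integer. Suppose ∑_{j=0}^{d−1} z_j^{m+k+nN} = 0 for all n = 0, 1, …, d−1. Define the equivalence relation z_i ∼ z_j iff z_i^N = z_j^N. Then for every equivalence class C ⊆ {z_0, …, z_{d−1}} one has ∑_{z∈C} z^{m+k} = 0. -/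
open Classical

theorem stmt6 (d : ℕ) (hd : 2 ≤ d) (z : Fin d → ℂ) (hinj : Function.Injective z)
    (hz : ∀ j, z j ≠ 0) (m k : ℤ) (N : ℕ) (hN : 1 ≤ N)
    (h : ∀ n : ℕ, n ≤ d - 1 → ∑ j : Fin d, z j ^ (m + k + (n : ℤ) * N) = 0) :
    ∀ j₀ : Fin d,
      ∑ i ∈ Finset.univ.filter (fun i : Fin d => z i ^ N = z j₀ ^ N),
        z i ^ (m + k) = 0 := by
  intro j₀
  set s : Finset ℂ := Finset.univ.image (fun i => z i ^ N) with hs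
  set t := s.card with ht
  have htd : t ≤ d := by
    calc t ≤ (Finset.univ : Finset (Fin d)).card := Finset.card_image_le
    _ = d := by simp
  have e : {x // x ∈ s} ≃ Fin t := s.equivFin
  set w : Fin t → ℂ := fun a => ((e.symm a : {x // x ∈ s}) : ℂ) with hw
  have hwinj : Function.Injective w := by
    intro a b hab
    exact e.symm.injective (Subtype.ext hab)
  set c : Fin t → ℂ := fun a =>
    ∑ i ∈ Finset.univ.filter (fun i : Fin d => z i ^ N = w a), z i ^ (m + k) with hc
  have key : ∀ n : Fin t, ∑ a, w a ^ (n : ℕ) * c a = 0 := by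
    intro n
    have hn : (n : ℕ) ≤ d - 1 := by
      have := n.2
      omega
    have h0 := h n hn
    have expand : ∀ j : Fin d,
        z j ^ (m + k + (n : ℤ) * N) = z j ^ (m + k) * (z j ^ N) ^ (n : ℕ) := by
      intro j
      rw [zpow_add₀ (hz j)]
      congr 1
      rw [zpow_mul', zpow_natCast, zpow_natCast]
    rw [Finset.sum_congr rfl (fun j _ => expand j)] at h0
    have fib : ∑ y ∈ s, ∑ j ∈ Finset.univ.filter (fun j : Fin d => z j ^ N = y),
        z j ^ (m + k) * (z j ^ N) ^ (n : ℕ) = ∑ j : Fin d, z j ^ (m + k) * (z j ^ N) ^ (n : ℕ) :=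
      Finset.sum_fiberwise_of_maps_to (fun j _ => Finset.mem_image_of_mem _ (Finset.mem_univ j)) _
    rw [← fib] at h0
    have fib2 : ∀ y ∈ s, ∑ j ∈ Finset.univ.filter (fun j : Fin d => z j ^ N = y),
        z j ^ (m + k) * (z j ^ N) ^ (n : ℕ)
        = y ^ (n : ℕ) * ∑ j ∈ Finset.univ.filter (fun j : Fin d => z j ^ N = y),
            z j ^ (m + k) := by
      intro y _
      rw [Finset.mul_sum]
      apply Finset.sum_congr rfl
      intro j hj
      rw [Finset.mem_filter] at hj
      rw [hj.2]
      ring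
    rw [Finset.sum_congr rfl fib2] at h0
    rw [← h0]
    rw [← Finset.sum_coe_sort s (fun y => y ^ (n : ℕ) *
      ∑ j ∈ Finset.univ.filter (fun j : Fin d => z j ^ N = y), z j ^ (m + k))]
    exact Fintype.sum_equiv e.symm _ _ (fun a => rfl)
  -- Vandermonde argument
  have hc0 : c = 0 := by
    have hdet : (Matrix.vandermonde w).det ≠ 0 :=
      Matrix.det_vandermonde_ne_zero_iff.mpr hwinj
    have hdetT : ((Matrix.vandermonde w).transpose).det ≠ 0 := by
      rwa [Matrix.det_transpose]
    apply Matrix.eq_zero_of_mulVec_eq_zero hdetT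
    funext n
    simp only [Matrix.mulVec, dotProduct, Matrix.transpose_apply,
      Matrix.vandermonde, Matrix.of_apply, Pi.zero_apply]
    exact key n
  have hmem : z j₀ ^ N ∈ s := Finset.mem_image_of_mem _ (Finset.mem_univ j₀)
  have hwz : w (e ⟨z j₀ ^ N, hmem⟩) = z j₀ ^ N := by
    simp [hw]
  have h2 := congrFun hc0 (e ⟨z j₀ ^ N, hmem⟩)
  simp only [hc, hwz, Pi.zero_apply] at h2
  exact h2
end

section
/- (Tijdeman) Let d ≥ 2, let z_0, …, z_{d−1} be distinct nonzero complex numbers and set f_p = ∑_{j=0}^{d−1} z_j^p for p ∈ ℤ. Let m ∈ ℤ and let N be an integer with N > d−1. If f_{m+k} = 0 and f_{m+N+k} = 0 for all k = 1, …, d−1 (a (d−1) × 2 flag in the zero set of the power sums), then f_{m+nN+k} = 0 for all k = 1, …, d−1 and all n = 0, 1, …, d−1 (the extended (d−1) × d flag is also in the zero set). -/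
theorem stmt7 (d : ℕ) (hd : 2 ≤ d) (z : Fin d → ℂ) (hinj : Function.Injective z)
    (hz : ∀ j, z j ≠ 0) (f : ℤ → ℂ) (hf : ∀ p : ℤ, f p = ∑ j : Fin d, z j ^ p)
    (m N : ℤ) (hN : (d : ℤ) - 1 < N)
    (hflag : ∀ k : ℕ, 1 ≤ k → k ≤ d - 1 → f (m + k) = 0 ∧ f (m + N + k) = 0) :
    ∀ k : ℕ, 1 ≤ k → k ≤ d - 1 → ∀ n : ℕ, n ≤ d - 1 → f (m + (n : ℤ) * N + k) = 0 := by
  obtain ⟨e, rfl⟩ : ∃ e, d = e + 1 := ⟨d - 1, by omega⟩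
  simp only [Nat.add_sub_cancel] at hflag ⊢
  -- base vanishing
  have h1 : ∀ k : ℕ, 1 ≤ k → k ≤ e → ∑ j : Fin (e + 1), z j ^ (m + (k : ℤ)) = 0 := by
    intro k hk1 hk2
    have := (hflag k hk1 hk2).1
    rwa [hf] at this
  have h2 : ∀ k : ℕ, 1 ≤ k → k ≤ e →
      ∑ j : Fin (e + 1), z j ^ N * z j ^ (m + (k : ℤ)) = 0 := by
    intro k hk1 hk2
    have := (hflag k hk1 hk2).2
    rw [hf] at this
    rw [← this]
    refine Finset.sum_congr rfl fun j _ => ?_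
    rw [← zpow_add₀ (hz j)]
    ring_nf
  -- the difference vector
  set v : Fin e → ℂ := fun j => z j.succ ^ N - z 0 ^ N with hv
  have hsum : ∀ k : Fin e, ∑ j : Fin e, z j.succ ^ (m + 1 + (k : ℤ)) * v j = 0 := by
    intro k
    have hk1 : 1 ≤ k.1 + 1 := by omega
    have hk2 : k.1 + 1 ≤ e := k.2
    have e1 := h1 (k.1 + 1) hk1 hk2
    have e2 := h2 (k.1 + 1) hk1 hk2
    have hexp : m + ((k.1 + 1 : ℕ) : ℤ) = m + 1 + (k : ℤ) := by push_cast; ring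
    rw [hexp] at e1 e2
    have big : ∑ j : Fin (e + 1), z j ^ (m + 1 + (k : ℤ)) * (z j ^ N - z 0 ^ N) = 0 := by
      have : ∑ j : Fin (e + 1), z j ^ (m + 1 + (k : ℤ)) * (z j ^ N - z 0 ^ N)
          = (∑ j : Fin (e + 1), z j ^ N * z j ^ (m + 1 + (k : ℤ)))
            - z 0 ^ N * ∑ j : Fin (e + 1), z j ^ (m + 1 + (k : ℤ)) := by
        rw [Finset.mul_sum, ← Finset.sum_sub_distrib]
        refine Finset.sum_congr rfl fun j _ => by ring
      rw [this, e1, e2, mul_zero, sub_zero]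
    rw [Fin.sum_univ_succ] at big
    simpa [hv] using big
  -- the Vandermonde-type matrix is invertible
  set B : Matrix (Fin e) (Fin e) ℂ :=
    Matrix.of fun k j : Fin e => z j.succ ^ (m + 1 + (k : ℤ)) with hB
  have hBdet : B.det ≠ 0 := by
    have hBeq : B = (Matrix.diagonal (fun j : Fin e => z j.succ ^ (m + 1)) *
        Matrix.vandermonde (fun j : Fin e => z j.succ)).transpose := by
      ext k j
      simp only [hB, Matrix.of_apply, Matrix.transpose_apply, Matrix.mul_apply,
        Matrix.diagonal_apply, Matrix.vandermonde_apply, ite_mul, zero_mul]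
      rw [Finset.sum_ite_eq, if_pos (Finset.mem_univ j)]
      rw [← zpow_natCast (z j.succ) (k : ℕ), ← zpow_add₀ (hz j.succ)]
    rw [hBeq, Matrix.det_transpose, Matrix.det_mul, Matrix.det_diagonal]
    refine mul_ne_zero (Finset.prod_ne_zero_iff.mpr fun j _ => zpow_ne_zero _ (hz j.succ)) ?_
    rw [Matrix.det_vandermonde_ne_zero_iff]
    exact fun a b hab => Fin.succ_injective e (hinj hab)
  have hv0 : v = 0 := by
    apply Matrix.eq_zero_of_mulVec_eq_zero hBdet
    funext k
    simpa [Matrix.mulVec, dotProduct, hB] using hsum k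
  -- all N-th powers agree
  have hkey : ∀ j : Fin (e + 1), z j ^ N = z 0 ^ N := by
    intro j
    refine Fin.cases rfl (fun i => ?_) j
    have := congrFun hv0 i
    simpa [hv, sub_eq_zero] using this
  -- conclude
  intro k hk1 hk2 n hn
  rw [hf]
  have base := h1 k hk1 hk2
  have : ∀ j : Fin (e + 1), z j ^ (m + (n : ℤ) * N + (k : ℤ))
      = (z 0 ^ N) ^ (n : ℤ) * z j ^ (m + (k : ℤ)) := by
    intro j
    rw [show m + (n : ℤ) * N + (k : ℤ) = N * (n : ℤ) + (m + (k : ℤ)) by ring,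
      zpow_add₀ (hz j), zpow_mul, hkey j]
  rw [Finset.sum_congr rfl fun j _ => this j, ← Finset.mul_sum, base, mul_zero]
end

section
/- Let d ≥ 2, let z_0, …, z_{d−1} be distinct nonzero complex numbers and set f_p = ∑_{j=0}^{d−1} z_j^p for p ∈ ℤ. Let m ∈ ℤ and let r, N be integers with 1 ≤ r < d and N > r. If f_{m+nN+k} = 0 for all k = 1, …, r and all n = 0, 1, …, d−r (an r × (d−r+1) flag in the zero set), then f_{m+nN+k} = 0 for all k = 1, …, r and all n = 0, 1, …, d−1 (the extended r × d flag is also in the zero set). -/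
/-!
Put w_j = z_j ^ N. Row k of the flag is the exponential sum
n ↦ f (m + n N + k) = ∑_j c_kj w_j ^ n with coefficient vectors c_k = (z_j ^ (m + k))_j, which are
linearly independent for k = 1, …, r since the z_j are distinct (Vandermonde). The d - r + 1
vectors (w_j ^ n)_j, n ≤ d - r, are orthogonal to all c_k, so they are linearly dependent: a
nonzero polynomial P of degree ≤ d - r vanishes at every w_j. Reducing X ^ n modulo P writes every
term of a row as a combination of its first d - r + 1 terms, which vanish by hypothesis.
-/

open Polynomial
open scoped Matrix

theorem Matrix.exists_mulVec_eq_zero_of_linearIndependent_vecMul {ι κ ρ K : Type*}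
    [Fintype ι] [Fintype κ] [Fintype ρ] [Field K] (M : Matrix ι κ K) (c : ρ → ι → K)
    (hc : LinearIndependent K c) (hcM : ∀ k, c k ᵥ* M = 0)
    (hcard : Fintype.card ι < Fintype.card ρ + Fintype.card κ) :
    ∃ μ ≠ 0, M *ᵥ μ = 0 := by
  have hker : Fintype.card ρ ≤ Module.finrank K (LinearMap.ker Mᵀ.mulVecLin) := by
    have hspan : Submodule.span K (Set.range c) ≤ LinearMap.ker Mᵀ.mulVecLin :=
      Submodule.span_le.mpr <| Set.range_subset_iff.mpr fun k => by
        simpa [Matrix.mulVec_transpose] using hcM k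
    simpa [finrank_span_eq_card hc] using Submodule.finrank_mono hspan
  have hrankT := LinearMap.finrank_range_add_finrank_ker Mᵀ.mulVecLin
  have hrank := LinearMap.finrank_range_add_finrank_ker M.mulVecLin
  -- rank M = rank Mᵀ ≤ card ι - card ρ < card κ
  have htranspose : Mᵀ.rank = M.rank := M.rank_transpose
  simp only [Matrix.rank, Module.finrank_fintype_fun_eq_card] at hrankT hrank htranspose
  have hpos : 0 < Module.finrank K (LinearMap.ker M.mulVecLin) := by omega
  obtain ⟨⟨μ, hμ⟩, hμ0⟩ := Module.finrank_pos_iff_exists_ne_zero.mp hpos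
  exact ⟨μ, by simpa using hμ0, hμ⟩

theorem linearIndependent_mul_pow {ι K : Type*} [Fintype ι] [Field K] {r : ℕ}
    {u z : ι → K} (hu : ∀ j, u j ≠ 0) (hz : Function.Injective z) (hr : r ≤ Fintype.card ι) :
    LinearIndependent K fun (k : Fin r) j => u j * z j ^ (k : ℕ) := by
  obtain ⟨e⟩ : Nonempty (Fin r ↪ ι) :=
    Function.Embedding.nonempty_of_card_le (by simpa using hr)
  rw [Fintype.linearIndependent_iff]
  intro a ha
  refine congrFun (Matrix.eq_zero_of_forall_index_sum_mul_pow_eq_zero (hz.comp e.injective)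
    fun i => ?_)
  have hj := congrFun ha (e i)
  simp only [Finset.sum_apply, Pi.smul_apply, smul_eq_mul, Pi.zero_apply, mul_left_comm (a _),
    ← Finset.mul_sum] at hj
  exact (mul_eq_zero.mp hj).resolve_left (hu _)

theorem exists_ne_zero_eval_eq_zero_of_linearIndependent {ι ρ K : Type*} [Fintype ι]
    [Fintype ρ] [Field K] {c : ρ → ι → K} (hc : LinearIndependent K c) (w : ι → K) {s : ℕ}
    (hs : Fintype.card ι < Fintype.card ρ + s)
    (hvanish : ∀ k, ∀ i < s, ∑ j, c k j * w j ^ i = 0) :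
    ∃ P : K[X], P ≠ 0 ∧ P.natDegree < s ∧ ∀ j, P.eval (w j) = 0 := by
  obtain ⟨μ, hμ0, hμ⟩ := Matrix.exists_mulVec_eq_zero_of_linearIndependent_vecMul
    (.of fun j (t : Fin s) => w j ^ (t : ℕ)) c hc
    (fun k => funext fun t => by simpa [Matrix.vecMul, dotProduct] using hvanish k t t.2)
    (by simpa using hs)
  set P : K[X] := ↑((degreeLTEquiv K s).symm μ)
  have hcoeff : ∀ t : Fin s, P.coeff t = μ t :=
    fun t => congrFun ((degreeLTEquiv K s).apply_symm_apply μ) t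
  have hP0 : P ≠ 0 := fun h => hμ0 (funext fun t => by simp [← hcoeff, h])
  have hdeg : P.natDegree < s :=
    (natDegree_lt_iff_degree_lt hP0).mpr (mem_degreeLT.mp ((degreeLTEquiv K s).symm μ).2)
  refine ⟨P, hP0, hdeg, fun j => ?_⟩
  rw [eval_eq_sum_range' hdeg, ← Fin.sum_univ_eq_sum_range]
  simpa [hcoeff, Matrix.mulVec, dotProduct, mul_comm] using congrFun hμ j

theorem sum_mul_pow_eq_zero_of_eval_eq_zero {ι K : Type*} [Fintype ι] [Field K] {a w : ι → K}
    {P : K[X]} (hP : P ≠ 0) (hPw : ∀ j, P.eval (w j) = 0)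
    (hlow : ∀ i < P.natDegree, ∑ j, a j * w j ^ i = 0) (n : ℕ) :
    ∑ j, a j * w j ^ n = 0 := by
  set R := X ^ n % P
  have hR : ∀ x, P.eval x = 0 → x ^ n = R.eval x := fun x hx => by
    simpa [hx] using congrArg (eval x) (EuclideanDomain.div_add_mod (X ^ n) P).symm
  have hsupp : ∀ e ∈ R.support, e < P.natDegree := fun e he => by
    have := (le_degree_of_mem_supp e he).trans_lt (degree_mod_lt _ hP)
    rwa [degree_eq_natDegree hP, Nat.cast_lt] at this
  calc ∑ j, a j * w j ^ n = ∑ j, a j * ∑ e ∈ R.support, R.coeff e * w j ^ e := by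
        simp_rw [hR _ (hPw _), eval_eq_sum, Polynomial.sum_def]
    _ = ∑ e ∈ R.support, R.coeff e * ∑ j, a j * w j ^ e := by
        simp_rw [Finset.mul_sum, mul_left_comm (a _)]
        exact Finset.sum_comm
    _ = 0 := Finset.sum_eq_zero fun e he => by rw [hlow e (hsupp e he), mul_zero]

theorem sum_mul_pow_eq_zero_of_linearIndependent {ι ρ K : Type*} [Fintype ι] [Fintype ρ]
    [Field K] {c : ρ → ι → K} (hc : LinearIndependent K c) (w : ι → K) {s : ℕ}
    (hs : Fintype.card ι < Fintype.card ρ + s)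
    (hvanish : ∀ k, ∀ i < s, ∑ j, c k j * w j ^ i = 0) (k : ρ) (n : ℕ) :
    ∑ j, c k j * w j ^ n = 0 := by
  obtain ⟨P, hP0, hdeg, hPw⟩ := exists_ne_zero_eval_eq_zero_of_linearIndependent hc w hs hvanish
  exact sum_mul_pow_eq_zero_of_eval_eq_zero hP0 hPw (fun i hi => hvanish k i (hi.trans hdeg)) n

theorem stmt8_general (d : ℕ) (z : Fin d → ℂ) (hinj : Function.Injective z)
    (hz : ∀ j, z j ≠ 0) (f : ℤ → ℂ) (hf : ∀ p : ℤ, f p = ∑ j : Fin d, z j ^ p)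
    (m : ℤ) (r : ℕ) (N : ℤ) (hr2 : r < d)
    (hflag : ∀ k n : ℕ, 1 ≤ k → k ≤ r → n ≤ d - r → f (m + (n : ℤ) * N + k) = 0) :
    ∀ k n : ℕ, 1 ≤ k → k ≤ r → n ≤ d - 1 → f (m + (n : ℤ) * N + k) = 0 := by
  have hrow : ∀ (k : Fin r) (n : ℕ), f (m + n * N + ((k : ℕ) + 1 : ℕ)) =
      ∑ j, z j ^ (m + 1) * z j ^ (k : ℕ) * (z j ^ N) ^ n := by
    intro k n
    rw [hf]
    refine Finset.sum_congr rfl fun j _ => ?_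
    rw [← zpow_natCast, ← zpow_natCast (z j ^ N), ← zpow_mul, ← zpow_add₀ (hz j),
      ← zpow_add₀ (hz j)]
    congr 1
    push_cast
    ring
  have hc := linearIndependent_mul_pow (u := fun j => z j ^ (m + 1))
    (fun j => zpow_ne_zero _ (hz j)) hinj (by simpa using hr2.le)
  intro k n hk1 hkr _
  obtain ⟨k, rfl⟩ := Nat.exists_eq_add_of_le' hk1
  rw [hrow ⟨k, by omega⟩]
  refine sum_mul_pow_eq_zero_of_linearIndependent hc (s := d - r + 1) _
    (by rw [Fintype.card_fin, Fintype.card_fin]; omega) (fun l i hi => ?_) _ n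
  rw [← hrow]
  exact hflag _ _ (by omega) l.2 (by omega)

theorem stmt8 (d : ℕ) (hd : 2 ≤ d) (z : Fin d → ℂ) (hinj : Function.Injective z)
    (hz : ∀ j, z j ≠ 0) (f : ℤ → ℂ) (hf : ∀ p : ℤ, f p = ∑ j : Fin d, z j ^ p)
    (m : ℤ) (r : ℕ) (N : ℤ) (hr1 : 1 ≤ r) (hr2 : r < d) (hN : (r : ℤ) < N)
    (hflag : ∀ k n : ℕ, 1 ≤ k → k ≤ r → n ≤ d - r → f (m + (n : ℤ) * N + k) = 0) :
    ∀ k n : ℕ, 1 ≤ k → k ≤ r → n ≤ d - 1 → f (m + (n : ℤ) * N + k) = 0 :=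
  stmt8_general d z hinj hz f hf m r N hr2 hflag
end

section
/- Let A ⊂ ℤ with |A| = d, let Ω = ⋃_{a∈A}[a, a+1], and let Γ = {γ_0, γ_1, …, γ_{d−1}} ⊂ [0,1) be distinct reals such that Λ = Γ + ℤ is a spectrum for Ω. Then for every nonzero integer n ∈ A − A, one has ∑_{j=0}^{d−1} e^{2πiγ_j n} = 0; that is, (A − A) \ {0} is contained in the integer zero set of δ̂_Γ. -/
open MeasureTheory Complex

/-!
For `a ≠ b` in `A` the indicators of `[a, a + 1]` and `[b, b + 1]` are orthogonal in `L²(Ω)`, so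
Parseval's identity in the basis `K e^{2πiλx}` gives `∑_λ |K|² e^{2πiλ(a-b)} |φ(λ)|² = 0`, where
`φ(ξ) = ∫₀¹ e^{2πiξt} dt`. Grouping `λ = γ_j + m` according to `j`, the exponential depends only
on `j`, and `∑_m |φ(γ_j + m)|² = 1` is Parseval's identity for `e^{2πiγ_j x}` on `ℝ/ℤ`.
The same computation with `a = b` gives `∑_λ |K|² |φ(λ)|² = 1`, so `K ≠ 0`.
-/

open Set
open scoped Real

lemma norm_exp_two_pi_I_mul (ξ x : ℝ) : ‖exp (2 * π * I * ξ * x)‖ = 1 := by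
  rw [show 2 * π * I * ξ * x = ((2 * π * ξ * x : ℝ) : ℂ) * I by push_cast; ring,
    norm_exp_ofReal_mul_I]

noncomputable def unitIntervalFT (ξ : ℝ) : ℂ :=
  ∫ t in (0 : ℝ)..1, exp (2 * π * I * ξ * t)

lemma setIntegral_Icc_exp_eq (ξ c : ℝ) :
    ∫ x in Icc c (c + 1), exp (2 * π * I * ξ * x) =
      exp (2 * π * I * ξ * c) * unitIntervalFT ξ := by
  have h := intervalIntegral.integral_comp_add_left (fun x : ℝ => exp (2 * π * I * ξ * x)) c
    (a := 0) (b := 1)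
  rw [add_zero] at h
  rw [integral_Icc_eq_integral_Ioc, ← intervalIntegral.integral_of_le (by linarith), ← h,
    unitIntervalFT, ← intervalIntegral.integral_const_mul]
  refine intervalIntegral.integral_congr fun t _ => ?_
  rw [← exp_add]
  push_cast
  ring_nf

lemma hasSum_norm_sq_unitIntervalFT_add_int (ξ : ℝ) :
    HasSum (fun m : ℤ => ‖unitIntervalFT (ξ + m)‖ ^ 2) 1 := by
  have hnorm : ∀ x : ℝ, ‖exp (2 * π * I * ξ * x)‖ = 1 := norm_exp_two_pi_I_mul ξ
  have hmem : MemLp (fun x : ℝ => exp (2 * π * I * ξ * x)) 2 (volume.restrict (Ioc 0 1)) :=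
    MemLp.of_bound (by fun_prop) 1 (Filter.Eventually.of_forall fun x => (hnorm x).le)
  have h := hasSum_sq_fourierCoeffOn zero_lt_one hmem
  have hcoeff : ∀ k : ℤ, fourierCoeffOn zero_lt_one (fun x : ℝ => exp (2 * π * I * ξ * x)) k =
      unitIntervalFT (ξ + ((-k : ℤ) : ℝ)) := by
    intro k
    rw [fourierCoeffOn_eq_integral, sub_zero, div_one, one_smul, unitIntervalFT]
    refine intervalIntegral.integral_congr fun x _ => ?_
    rw [fourier_coe_apply, smul_eq_mul, ← exp_add]
    push_cast
    ring_nf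
  simp only [hcoeff, hnorm, sub_zero, inv_one, one_pow, intervalIntegral.integral_const,
    smul_eq_mul, mul_one] at h
  exact (Equiv.neg ℤ).hasSum_iff.mp h

lemma hasSum_exp_mul_norm_sq_unitIntervalFT_add_int (ξ : ℝ) (n : ℤ) :
    HasSum (fun m : ℤ =>
        exp (2 * π * I * ((ξ + m : ℝ) : ℂ) * n) * (‖unitIntervalFT (ξ + m)‖ ^ 2 : ℝ))
      (exp (2 * π * I * ξ * n)) := by
  have hperiodic : ∀ m : ℤ,
      exp (2 * π * I * ((ξ + m : ℝ) : ℂ) * n) = exp (2 * π * I * ξ * n) := by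
    intro m
    rw [show 2 * π * I * ((ξ + m : ℝ) : ℂ) * n = 2 * π * I * ξ * n + (m * n : ℤ) * (2 * π * I) by
      push_cast; ring, exp_add, exp_int_mul_two_pi_mul_I, mul_one]
  simp only [hperiodic]
  simpa using (ofRealCLM.hasSum (hasSum_norm_sq_unitIntervalFT_add_int ξ)).mul_left
    (exp (2 * π * I * ξ * n))

lemma injective_add_intCast_of_mem_Ico {ι : Type*} {γ : ι → ℝ} (hinj : Function.Injective γ)
    (hγ : ∀ j, γ j ∈ Ico (0 : ℝ) 1) : Function.Injective fun p : ι × ℤ => γ p.1 + p.2 := by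
  rintro ⟨j, m⟩ ⟨k, l⟩ h
  have hfloor : ∀ i (z : ℤ), ⌊γ i + z⌋ = z := fun i z => by
    rw [Int.floor_add_intCast, Int.floor_eq_zero_iff.mpr (hγ i), zero_add]
  have hml : m = l := by simpa only [hfloor] using congrArg Int.floor h
  subst hml
  simp only [add_left_inj] at h
  rw [hinj h]

noncomputable def addIntEquiv {ι : Type*} (γ : ι → ℝ)
    (h : Function.Injective fun p : ι × ℤ => γ p.1 + p.2) :
    ι × ℤ ≃ {x : ℝ | ∃ j : ι, ∃ n : ℤ, x = γ j + n} :=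
  Equiv.ofBijective (fun p => ⟨γ p.1 + p.2, p.1, p.2, rfl⟩)
    ⟨fun _ _ hpq => h (congrArg Subtype.val hpq),
      fun ⟨_, j, n, hx⟩ => ⟨(j, n), Subtype.ext hx.symm⟩⟩

@[simp]
lemma coe_addIntEquiv_apply {ι : Type*} (γ : ι → ℝ)
    (h : Function.Injective fun p : ι × ℤ => γ p.1 + p.2) (p : ι × ℤ) :
    (addIntEquiv γ h p : ℝ) = γ p.1 + p.2 :=
  rfl

lemma restrict_Icc_ne_top (Ω : Set ℝ) (c : ℝ) : volume.restrict Ω (Icc c (c + 1)) ≠ ⊤ :=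
  ((Measure.restrict_apply_le _ _).trans_lt measure_Icc_lt_top).ne

noncomputable def indicatorIcc (Ω : Set ℝ) (c : ℝ) : Lp ℂ 2 (volume.restrict Ω) :=
  indicatorConstLp 2 measurableSet_Icc (restrict_Icc_ne_top Ω c) 1

section SpectralBasis

variable {Ω Λ : Set ℝ} {K : ℂ} (B : HilbertBasis Λ ℂ (Lp ℂ 2 (volume.restrict Ω)))

lemma inner_indicatorIcc_hilbertBasis
    (hB : ∀ lam : Λ, (B lam : ℝ → ℂ) =ᵐ[volume.restrict Ω]
      fun x => K * exp (2 * π * I * (lam : ℝ) * x))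
    {c : ℝ} (hc : Icc c (c + 1) ⊆ Ω) (lam : Λ) :
    inner ℂ (indicatorIcc Ω c) (B lam) =
      K * (exp (2 * π * I * (lam : ℝ) * c) * unitIntervalFT lam) := by
  rw [indicatorIcc, L2.inner_indicatorConstLp_one, setIntegral_congr_ae measurableSet_Icc
    ((hB lam).mono fun x hx _ => hx), Measure.restrict_restrict measurableSet_Icc,
    inter_eq_self_of_subset_left hc, integral_const_mul, setIntegral_Icc_exp_eq]

lemma hasSum_inner_indicatorIcc
    (hB : ∀ lam : Λ, (B lam : ℝ → ℂ) =ᵐ[volume.restrict Ω]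
      fun x => K * exp (2 * π * I * (lam : ℝ) * x))
    {c c' : ℝ} (hc : Icc c (c + 1) ⊆ Ω) (hc' : Icc c' (c' + 1) ⊆ Ω) :
    HasSum (fun lam : Λ => ((‖K‖ ^ 2 : ℝ) : ℂ) *
        (exp (2 * π * I * (lam : ℝ) * ((c - c' : ℝ) : ℂ)) * (‖unitIntervalFT lam‖ ^ 2 : ℝ)))
      (volume.real (Icc c (c + 1) ∩ Icc c' (c' + 1))) := by
  have hsum := B.hasSum_inner_mul_inner (indicatorIcc Ω c) (indicatorIcc Ω c')
  rw [indicatorIcc, indicatorIcc, L2.inner_indicatorConstLp_one_indicatorConstLp_one _ _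
    (restrict_Icc_ne_top Ω c) (restrict_Icc_ne_top Ω c'),
    measureReal_restrict_apply (measurableSet_Icc.inter measurableSet_Icc),
    inter_eq_self_of_subset_left (inter_subset_left.trans hc)] at hsum
  refine hsum.congr_fun fun lam => ?_
  have hshift : exp (2 * π * I * (lam : ℝ) * c) =
      exp (2 * π * I * (lam : ℝ) * ((c - c' : ℝ) : ℂ)) * exp (2 * π * I * (lam : ℝ) * c') := by
    rw [← exp_add]
    push_cast
    ring_nf
  rw [← inner_conj_symm (B lam), ← indicatorIcc, ← indicatorIcc,
    inner_indicatorIcc_hilbertBasis B hB hc, inner_indicatorIcc_hilbertBasis B hB hc', hshift,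
    mul_assoc (exp _), mul_left_comm K, mul_assoc (exp _) (K * _), mul_conj', norm_mul, norm_mul,
    norm_exp_two_pi_I_mul]
  push_cast
  ring

end SpectralBasis

lemma volume_real_Icc_inter_Icc_of_ne {a b : ℤ} (hab : a ≠ b) :
    volume.real (Icc (a : ℝ) (a + 1) ∩ Icc (b : ℝ) (b + 1)) = 0 := by
  have h : ((min (a + 1) (b + 1) : ℤ) : ℝ) - (max a b : ℤ) ≤ 0 := by
    rw [sub_nonpos, Int.cast_le]
    omega
  push_cast at h
  rw [Icc_inter_Icc, Real.volume_real_Icc, max_eq_right h]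

lemma sum_exp_eq_zero_of_hilbertBasis {ι : Type*} [Fintype ι] {γ : ι → ℝ}
    (hinj : Function.Injective γ) (hγ : ∀ j, γ j ∈ Ico (0 : ℝ) 1) {Ω : Set ℝ} {K : ℂ}
    (B : HilbertBasis {x : ℝ | ∃ j : ι, ∃ n : ℤ, x = γ j + n} ℂ (Lp ℂ 2 (volume.restrict Ω)))
    (hB : ∀ lam, (B lam : ℝ → ℂ) =ᵐ[volume.restrict Ω]
      fun x => K * exp (2 * π * I * (lam : ℝ) * x))
    {a b : ℤ} (ha : Icc (a : ℝ) (a + 1) ⊆ Ω) (hb : Icc (b : ℝ) (b + 1) ⊆ Ω) (hab : a ≠ b) :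
    ∑ j, exp (2 * π * I * γ j * (a - b : ℤ)) = 0 := by
  have hdiag := hasSum_inner_indicatorIcc B hB ha ha
  rw [inter_self, Real.volume_real_Icc_of_le (by linarith), add_sub_cancel_left] at hdiag
  have hK : ((‖K‖ ^ 2 : ℝ) : ℂ) ≠ 0 := fun hK => by
    simp only [hK, zero_mul] at hdiag
    exact one_ne_zero (hasSum_zero.unique hdiag).symm
  have hoff := hasSum_inner_indicatorIcc B hB ha hb
  rw [volume_real_Icc_inter_Icc_of_ne hab] at hoff
  have hpairs : HasSum (fun p : ι × ℤ => ((‖K‖ ^ 2 : ℝ) : ℂ) *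
      (exp (2 * π * I * ((γ p.1 + p.2 : ℝ) : ℂ) * (a - b : ℤ)) *
        (‖unitIntervalFT (γ p.1 + p.2)‖ ^ 2 : ℝ))) 0 := by
    refine ((addIntEquiv γ (injective_add_intCast_of_mem_Ico hinj hγ)).hasSum_iff.mpr
      hoff).congr_fun fun p => ?_
    simp only [Function.comp_apply, coe_addIntEquiv_apply]
    push_cast
    rfl
  have hfiber : ∀ j, HasSum (fun m : ℤ => ((‖K‖ ^ 2 : ℝ) : ℂ) *
      (exp (2 * π * I * ((γ j + m : ℝ) : ℂ) * (a - b : ℤ)) * (‖unitIntervalFT (γ j + m)‖ ^ 2 : ℝ)))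
      (((‖K‖ ^ 2 : ℝ) : ℂ) * exp (2 * π * I * γ j * (a - b : ℤ))) := fun j =>
    (hasSum_exp_mul_norm_sq_unitIntervalFT_add_int (γ j) (a - b)).mul_left _
  have hsum := (hasSum_fintype _).unique (hpairs.prod_fiberwise hfiber)
  rw [← Finset.mul_sum] at hsum
  exact (mul_eq_zero.mp hsum).resolve_left hK

theorem stmt14_general (d : ℕ) (A : Finset ℤ)
    (γ : Fin d → ℝ) (hinj : Function.Injective γ)
    (hrange : ∀ j, γ j ∈ Set.Ico (0 : ℝ) 1)
    (hspec : IsSpectrum (⋃ a ∈ A, Set.Icc (a : ℝ) (a + 1))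
      {x : ℝ | ∃ j : Fin d, ∃ n : ℤ, x = γ j + n}) :
    ∀ n : ℤ, n ≠ 0 → (∃ a ∈ A, ∃ b ∈ A, n = a - b) →
      ∑ j : Fin d, Complex.exp (2 * Real.pi * Complex.I * γ j * n) = 0 := by
  rintro n hn ⟨a, ha, b, hb, rfl⟩
  obtain ⟨B, hB⟩ := hspec
  have hsub : ∀ c ∈ A, Icc (c : ℝ) (c + 1) ⊆ ⋃ a ∈ A, Icc (a : ℝ) (a + 1) :=
    fun c hc => subset_iUnion₂_of_subset c hc subset_rfl
  exact sum_exp_eq_zero_of_hilbertBasis hinj hrange B hB (hsub a ha) (hsub b hb) (by omega)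

theorem stmt14 (d : ℕ) (A : Finset ℤ) (hcard : A.card = d)
    (γ : Fin d → ℝ) (hinj : Function.Injective γ)
    (hrange : ∀ j, γ j ∈ Set.Ico (0 : ℝ) 1)
    (hspec : IsSpectrum (⋃ a ∈ A, Set.Icc (a : ℝ) (a + 1))
      {x : ℝ | ∃ j : Fin d, ∃ n : ℤ, x = γ j + n}) :
    ∀ n : ℤ, n ≠ 0 → (∃ a ∈ A, ∃ b ∈ A, n = a - b) →
      ∑ j : Fin d, Complex.exp (2 * Real.pi * Complex.I * γ j * n) = 0 :=
  stmt14_general d A γ hinj hrange hspec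
end
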